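/- arXiv:1502.06635 — 2 statements merged into one kernel-verified Lean document; each statement's English description precedes it below -/
import Mathlib

section
/- Let n ≥ 2 and let π and σ be permutations of {1,…,n} having the same cycle type (i.e., for every k, π and σ have the same number of cycles of length k). Then the number of instances of the stable roommates problem of size n for which π is a stable permutation equals the number of instances for which σ is a stable permutation; in particular P(π) = P(σ). -/
open MeasureTheory

/-- An instance of the stable roommates problem of size `n`: each participant `i`
has a strict ranking of all `n` participants (lower rank = more preferred) in which
`i` ranks himself last. -/
def RoomInstance (n : ℕ) : Type :=
  { r : Fin n → (Fin n ≃ Fin n) // ∀ i j : Fin n, j ≠ i → r i j < r i i }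

/-- `i` prefers `j` to `k` in the instance `r`. -/
def Prefers {n : ℕ} (r : RoomInstance n) (i j k : Fin n) : Prop :=
  r.1 i j < r.1 i k

/-- A permutation `π` is a stable permutation for the instance `r`:
(i) no participant `i` prefers `π i` to `π⁻¹ i`, and
(ii) if `i` prefers some `j ≠ π i` to `π i`, then `j` prefers `π j` to `i`. -/
def IsStablePerm {n : ℕ} (π : Equiv.Perm (Fin n)) (r : RoomInstance n) : Prop :=
  (∀ i : Fin n, ¬ Prefers r i (π i) (π⁻¹ i)) ∧
  (∀ i j : Fin n, j ≠ π i → Prefers r i j (π i) → Prefers r j (π j) i)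

/-- Conjugation of a roommates instance by a permutation `τ`. -/
def conjInst {n : ℕ} (τ : Equiv.Perm (Fin n)) (r : RoomInstance n) : RoomInstance n :=
  ⟨fun i => Equiv.trans ↑(τ⁻¹ : Equiv.Perm (Fin n)) (r.1 (τ⁻¹ i)), by
    intro i j hj
    exact r.2 _ _ (fun h => hj (by simpa using congrArg τ h))⟩

lemma prefers_conjInst {n : ℕ} (τ : Equiv.Perm (Fin n)) (r : RoomInstance n)
    (i j k : Fin n) :
    Prefers (conjInst τ r) i j k ↔ Prefers r (τ⁻¹ i) (τ⁻¹ j) (τ⁻¹ k) := Iff.rfl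

lemma isStable_conjInst {n : ℕ} (τ π : Equiv.Perm (Fin n)) (r : RoomInstance n)
    (h : IsStablePerm π r) : IsStablePerm (τ * π * τ⁻¹) (conjInst τ r) := by
  constructor
  · intro i
    have h1 : (τ⁻¹ : Equiv.Perm (Fin n)) ((τ * π * τ⁻¹) i) = π (τ⁻¹ i) := by
      simp [Equiv.Perm.mul_apply]
    have h2 : (τ⁻¹ : Equiv.Perm (Fin n)) ((τ * π * τ⁻¹)⁻¹ i) = π⁻¹ (τ⁻¹ i) := by
      simp [mul_inv_rev, Equiv.Perm.mul_apply]
    rw [prefers_conjInst, h1, h2]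
    exact h.1 (τ⁻¹ i)
  · intro i j hj hpref
    have h1 : (τ⁻¹ : Equiv.Perm (Fin n)) ((τ * π * τ⁻¹) i) = π (τ⁻¹ i) := by
      simp [Equiv.Perm.mul_apply]
    have h1' : (τ⁻¹ : Equiv.Perm (Fin n)) ((τ * π * τ⁻¹) j) = π (τ⁻¹ j) := by
      simp [Equiv.Perm.mul_apply]
    rw [prefers_conjInst, h1] at hpref
    rw [prefers_conjInst, h1']
    refine h.2 (τ⁻¹ i) (τ⁻¹ j) ?_ hpref
    intro hc
    apply hj
    have := congrArg τ hc
    simpa [Equiv.Perm.mul_apply] using this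

lemma conjInst_conjInst {n : ℕ} (τ τ' : Equiv.Perm (Fin n)) (r : RoomInstance n) :
    conjInst τ' (conjInst τ r) = conjInst (τ' * τ) r := by
  apply Subtype.ext
  funext i
  apply Equiv.ext
  intro j
  simp [conjInst, mul_inv_rev, Equiv.Perm.mul_apply]

lemma conjInst_one {n : ℕ} (r : RoomInstance n) : conjInst 1 r = r := by
  apply Subtype.ext
  funext i
  apply Equiv.ext
  intro j
  simp [conjInst]

lemma stable_card_conj {n : ℕ} (π : Equiv.Perm (Fin n)) (τ : Equiv.Perm (Fin n)) :
    Nat.card {r : RoomInstance n // IsStablePerm π r} =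
      Nat.card {r : RoomInstance n // IsStablePerm (τ * π * τ⁻¹) r} := by
  refine Nat.card_congr ⟨fun r => ⟨conjInst τ r.1, isStable_conjInst τ π r.1 r.2⟩,
    fun r => ⟨conjInst τ⁻¹ r.1, ?_⟩, ?_, ?_⟩
  · have := isStable_conjInst τ⁻¹ (τ * π * τ⁻¹) r.1 r.2
    simpa [mul_assoc] using this
  · intro r
    apply Subtype.ext
    simp [conjInst_conjInst, conjInst_one]
  · intro r
    apply Subtype.ext
    simp [conjInst_conjInst, conjInst_one]

theorem stable_count_depends_only_on_cycle_type
    (n : ℕ) (hn : 2 ≤ n) (π σ : Equiv.Perm (Fin n))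
    (hfix : (Finset.univ.filter fun i => π i = i).card =
            (Finset.univ.filter fun i => σ i = i).card)
    (hcyc : ∀ k : ℕ, Multiset.count k π.cycleType = Multiset.count k σ.cycleType) :
    Nat.card {r : RoomInstance n // IsStablePerm π r} =
      Nat.card {r : RoomInstance n // IsStablePerm σ r} ∧
    (Nat.card {r : RoomInstance n // IsStablePerm π r} : ℚ) /
        ((n - 1).factorial : ℚ) ^ n =
      (Nat.card {r : RoomInstance n // IsStablePerm σ r} : ℚ) /
        ((n - 1).factorial : ℚ) ^ n := by
  have hct : π.cycleType = σ.cycleType := Multiset.ext.mpr hcyc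
  obtain ⟨c, hc⟩ := Equiv.Perm.isConj_of_cycleType_eq hct
  have hσ : σ = (c : Equiv.Perm (Fin n)) * π * (c : Equiv.Perm (Fin n))⁻¹ :=
    eq_mul_inv_of_mul_eq hc.eq.symm
  have key : Nat.card {r : RoomInstance n // IsStablePerm π r} =
      Nat.card {r : RoomInstance n // IsStablePerm σ r} := by
    rw [hσ]
    exact stable_card_conj π c
  exact ⟨key, by rw [key]⟩
end

section
/- Let n ≥ 4 be even. Then the number of integer partitions of n that contain at most one part equal to 1 and contain at least one odd part equals p(n) − p(n−2) − p(n/2), where p(m) denotes the number of integer partitions of m. -/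
open Multiset

private def eraseTwoEquiv (n : ℕ) (hn : 2 ≤ n) :
    {p : n.Partition // 2 ≤ Multiset.count 1 p.parts} ≃ (n - 2).Partition where
  toFun p :=
    { parts := (p.1.parts.erase 1).erase 1
      parts_pos := fun hi => p.1.parts_pos (mem_of_mem_erase (mem_of_mem_erase hi))
      parts_sum := by
        have h2 : (1 : ℕ) ∈ p.1.parts.erase 1 := by
          rw [← Multiset.count_pos, Multiset.count_erase_self]
          have := p.2; omega
        have e2 : (1 : ℕ) ::ₘ (p.1.parts.erase 1).erase 1 = p.1.parts.erase 1 :=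
          Multiset.cons_erase h2
        have h1 : (1 : ℕ) ∈ p.1.parts := Multiset.mem_of_mem_erase h2
        have e1 : (1 : ℕ) ::ₘ p.1.parts.erase 1 = p.1.parts := Multiset.cons_erase h1
        have hs := p.1.parts_sum
        rw [← e1, ← e2, Multiset.sum_cons, Multiset.sum_cons] at hs
        omega }
  invFun q :=
    ⟨{ parts := 1 ::ₘ 1 ::ₘ q.parts
       parts_pos := by
         intro i hi
         rcases Multiset.mem_cons.mp hi with rfl | hi
         · norm_num
         rcases Multiset.mem_cons.mp hi with rfl | hi
         · norm_num
         · exact q.parts_pos hi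
       parts_sum := by
         have := q.parts_sum
         simp only [Multiset.sum_cons, this]
         omega },
     by simp [Multiset.count_cons]⟩
  left_inv p := by
    apply Subtype.ext
    apply Nat.Partition.ext
    have h2 : (1 : ℕ) ∈ p.1.parts.erase 1 := by
      rw [← Multiset.count_pos, Multiset.count_erase_self]
      have := p.2; omega
    have h1 : (1 : ℕ) ∈ p.1.parts := Multiset.mem_of_mem_erase h2
    simp only
    rw [Multiset.cons_erase h2, Multiset.cons_erase h1]
  right_inv q := by
    apply Nat.Partition.ext
    simp only
    rw [Multiset.erase_cons_head, Multiset.erase_cons_head]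

private def halveEquiv (n : ℕ) (hev : Even n) :
    {p : n.Partition // ∀ i ∈ p.parts, Even i} ≃ (n / 2).Partition where
  toFun p :=
    { parts := p.1.parts.map (· / 2)
      parts_pos := by
        intro i hi
        obtain ⟨j, hj, rfl⟩ := Multiset.mem_map.mp hi
        have h1 := p.1.parts_pos hj
        obtain ⟨k, hk⟩ := p.2 j hj
        omega
      parts_sum := by
        have h2 : ((p.1.parts.map (· / 2)).map (· * 2)) = p.1.parts := by
          rw [Multiset.map_map]
          conv_rhs => rw [← Multiset.map_id p.1.parts]
          apply Multiset.map_congr rfl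
          intro i hi
          simp only [Function.comp_apply, id]
          exact Nat.div_mul_cancel (p.2 i hi).two_dvd
        have hs : ((p.1.parts.map (· / 2)).map (· * 2)).sum = n := by
          rw [h2, p.1.parts_sum]
        rw [Multiset.sum_map_mul_right, Multiset.map_id'] at hs
        omega }
  invFun q :=
    ⟨{ parts := q.parts.map (· * 2)
       parts_pos := by
         intro i hi
         obtain ⟨j, hj, rfl⟩ := Multiset.mem_map.mp hi
         have := q.parts_pos hj
         omega
       parts_sum := by
         rw [Multiset.sum_map_mul_right, Multiset.map_id', q.parts_sum]
         exact Nat.div_mul_cancel hev.two_dvd },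
     by
       intro i hi
       obtain ⟨j, hj, rfl⟩ := Multiset.mem_map.mp hi
       exact ⟨j, by ring⟩⟩
  left_inv p := by
    apply Subtype.ext
    apply Nat.Partition.ext
    simp only [Multiset.map_map]
    conv_rhs => rw [← Multiset.map_id p.1.parts]
    apply Multiset.map_congr rfl
    intro i hi
    simp only [Function.comp_apply, id]
    exact Nat.div_mul_cancel (p.2 i hi).two_dvd
  right_inv q := by
    apply Nat.Partition.ext
    simp only [Multiset.map_map]
    conv_rhs => rw [← Multiset.map_id q.parts]
    apply Multiset.map_congr rfl
    intro i hi
    simp only [Function.comp_apply, id]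
    omega

theorem card_partitions_at_most_one_one_and_odd_part (n : ℕ) (hn : 4 ≤ n) (hev : Even n) :
    (Nat.card {p : n.Partition //
        Multiset.count 1 p.parts ≤ 1 ∧ ∃ i ∈ p.parts, Odd i} : ℤ) =
      (Nat.card (n.Partition) : ℤ) - (Nat.card ((n - 2).Partition) : ℤ) -
        (Nat.card ((n / 2).Partition) : ℤ) := by
  classical
  have h2n : 2 ≤ n := by omega
  have hA : Nat.card {p : n.Partition // 2 ≤ Multiset.count 1 p.parts} =
      Nat.card ((n - 2).Partition) := Nat.card_congr (eraseTwoEquiv n h2n)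
  have hB : Nat.card {p : n.Partition // ∀ i ∈ p.parts, Even i} =
      Nat.card ((n / 2).Partition) := Nat.card_congr (halveEquiv n hev)
  set G := Finset.univ.filter
    (fun p : n.Partition => Multiset.count 1 p.parts ≤ 1 ∧ ∃ i ∈ p.parts, Odd i) with hGdef
  set A := Finset.univ.filter (fun p : n.Partition => 2 ≤ Multiset.count 1 p.parts) with hAdef
  set B := Finset.univ.filter (fun p : n.Partition => ∀ i ∈ p.parts, Even i) with hBdef
  have hGc : Nat.card {p : n.Partition //
      Multiset.count 1 p.parts ≤ 1 ∧ ∃ i ∈ p.parts, Odd i} = G.card := by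
    rw [Nat.card_eq_fintype_card, Fintype.card_subtype]
  have hAc : Nat.card {p : n.Partition // 2 ≤ Multiset.count 1 p.parts} = A.card := by
    rw [Nat.card_eq_fintype_card, Fintype.card_subtype]
  have hBc : Nat.card {p : n.Partition // ∀ i ∈ p.parts, Even i} = B.card := by
    rw [Nat.card_eq_fintype_card, Fintype.card_subtype]
  have hGA : Disjoint G A := by
    rw [Finset.disjoint_left]
    intro p hp hq
    simp only [hGdef, hAdef, Finset.mem_filter] at hp hq
    omega
  have hGB : Disjoint G B := by
    rw [Finset.disjoint_left]
    intro p hp hq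
    simp only [hGdef, hBdef, Finset.mem_filter] at hp hq
    obtain ⟨-, -, i, hi, hodd⟩ := hp
    exact (Nat.not_even_iff_odd.mpr hodd) (hq.2 i hi)
  have hAB : Disjoint A B := by
    rw [Finset.disjoint_left]
    intro p hp hq
    simp only [hAdef, hBdef, Finset.mem_filter] at hp hq
    have h1 : (1 : ℕ) ∈ p.parts := by rw [← Multiset.count_pos]; omega
    have := hq.2 1 h1
    simp at this
  have hU : (Finset.univ : Finset n.Partition) = G ∪ A ∪ B := by
    ext p
    simp only [Finset.mem_union, hGdef, hAdef, hBdef, Finset.mem_filter, Finset.mem_univ,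
      true_and, true_iff]
    by_cases h1 : 2 ≤ Multiset.count 1 p.parts
    · tauto
    by_cases h2 : ∀ i ∈ p.parts, Even i
    · tauto
    push_neg at h2
    obtain ⟨i, hi, hie⟩ := h2
    exact Or.inl (Or.inl ⟨by omega, i, hi, Nat.not_even_iff_odd.mp hie⟩)
  have hcard : Fintype.card n.Partition = G.card + A.card + B.card := by
    rw [← Finset.card_univ, hU, Finset.card_union_of_disjoint, Finset.card_union_of_disjoint hGA]
    rw [Finset.disjoint_union_left]
    exact ⟨hGB, hAB⟩
  have htot : Nat.card n.Partition = G.card + A.card + B.card := by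
    rw [Nat.card_eq_fintype_card]; exact hcard
  rw [hGc, htot, ← hA, ← hB, hAc, hBc]
  push_cast
  ring
end
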